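/- Let x_1, ..., x_n be pairwise distinct points in R^M and let p : R^{nM} → [0, ∞) be continuous, integrable, and invariant under block permutations (p(y_{σ(1:n)}) = p(y_{1:n}) for all σ ∈ S_n). Then for all sufficiently small δ > 0, the integral of p over the Wasserstein ball {y_{1:n} : d_W(x_{1:n}, y_{1:n}) ≤ δ} equals n! times the integral of p over the single Euclidean ball of radius √n·δ centered at x_{1:n} in R^{nM}. -/

import Mathlib

open MeasureTheory Metric Real Asymptotics
open scoped BigOperators ENNReal

noncomputable def concat {n M : ℕ} (x : Fin n → EuclideanSpace ℝ (Fin M)) :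
    EuclideanSpace ℝ (Fin n × Fin M) :=
  WithLp.toLp 2 (fun p => x p.1 p.2)

noncomputable def deconcat {n M : ℕ} (z : EuclideanSpace ℝ (Fin n × Fin M)) :
    Fin n → EuclideanSpace ℝ (Fin M) :=
  fun i => WithLp.toLp 2 (fun m => z (i, m))

noncomputable def dW {n M : ℕ} (x y : Fin n → EuclideanSpace ℝ (Fin M)) : ℝ :=
  Real.sqrt (⨅ σ : Equiv.Perm (Fin n), (1 / (n : ℝ)) * ∑ i, dist (x i) (y (σ i)) ^ 2)


/-!
The Wasserstein ball of radius `δ` about `x` is the union, over `σ ∈ Sₙ`, of the Euclidean balls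
of radius `√n δ` about the block permutations `x ∘ σ`. Since the `x i` are distinct, these `n!`
centres are distinct, so for small `δ` the balls are pairwise disjoint. Block permutations are
linear isometries of `ℝ^{nM}`, hence preserve Lebesgue measure; as they also preserve `p`, each
ball carries the same integral as the one about `x`.
-/

theorem exists_pos_le_dist_of_injective {ι X : Type*} [Finite ι] [MetricSpace X] {f : ι → X}
    (hf : Function.Injective f) : ∃ ε > 0, Pairwise fun i j => ε ≤ dist (f i) (f j) := by
  classical
  cases isEmpty_or_nonempty ι
  · exact ⟨1, one_pos, fun i => isEmptyElim i⟩
  -- the diagonal gets the dummy value `1` so that a minimum over all pairs is positive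
  let g : ι × ι → ℝ := fun q => if q.1 = q.2 then 1 else dist (f q.1) (f q.2)
  obtain ⟨q₀, hq₀⟩ := Finite.exists_min g
  refine ⟨g q₀, ?_, fun i j hij => by simpa [g, hij] using hq₀ (i, j)⟩
  by_cases h : q₀.1 = q₀.2
  · simp [g, h]
  · simpa [g, h] using hf.ne h

theorem exists_pos_pairwise_disjoint_closedBall {ι X : Type*} [Finite ι] [MetricSpace X]
    {f : ι → X} (hf : Function.Injective f) :
    ∃ ε > 0, ∀ r < ε, Pairwise (Function.onFun Disjoint fun i => closedBall (f i) r) := by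
  obtain ⟨ε, hε, hsep⟩ := exists_pos_le_dist_of_injective hf
  exact ⟨ε / 2, by positivity, fun r hr i j hij =>
    closedBall_disjoint_closedBall (by linarith [hsep hij])⟩

theorem setIntegral_closedBall_apply_eq {E G : Type*} [NormedAddCommGroup E]
    [InnerProductSpace ℝ E] [FiniteDimensional ℝ E] [MeasurableSpace E] [BorelSpace E]
    [NormedAddCommGroup G] [NormedSpace ℝ G] (e : E ≃ₗᵢ[ℝ] E) {f : E → G}
    (hf : ∀ z, f (e z) = f z) (c : E) (r : ℝ) :
    ∫ z in closedBall (e c) r, f z = ∫ z in closedBall c r, f z := by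
  rw [← e.measurePreserving.setIntegral_preimage_emb e.toHomeomorph.measurableEmbedding,
    e.isometry.preimage_closedBall]
  simp only [hf]

section Blocks

variable {n M : ℕ}

theorem deconcat_concat (y : Fin n → EuclideanSpace ℝ (Fin M)) : deconcat (concat y) = y := rfl

theorem concat_deconcat (z : EuclideanSpace ℝ (Fin n × Fin M)) : concat (deconcat z) = z := rfl

theorem concat_injective : Function.Injective (concat : (Fin n → EuclideanSpace ℝ (Fin M)) → _) :=
  Function.LeftInverse.injective deconcat_concat

theorem dist_concat_sq (y y' : Fin n → EuclideanSpace ℝ (Fin M)) :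
    dist (concat y) (concat y') ^ 2 = ∑ i, dist (y i) (y' i) ^ 2 := by
  rw [EuclideanSpace.dist_eq, Real.sq_sqrt (by positivity), Fintype.sum_prod_type]
  refine Finset.sum_congr rfl fun i _ => ?_
  rw [EuclideanSpace.dist_eq, Real.sq_sqrt (by positivity)]
  rfl

noncomputable def blockPerm (σ : Equiv.Perm (Fin n)) :
    EuclideanSpace ℝ (Fin n × Fin M) ≃ₗᵢ[ℝ] EuclideanSpace ℝ (Fin n × Fin M) :=
  LinearIsometryEquiv.piLpCongrLeft 2 ℝ ℝ (σ⁻¹.prodCongr (Equiv.refl (Fin M)))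

theorem blockPerm_concat (σ : Equiv.Perm (Fin n)) (y : Fin n → EuclideanSpace ℝ (Fin M)) :
    blockPerm σ (concat y) = concat (y ∘ σ) := by
  ext ⟨i, m⟩
  simp only [blockPerm, LinearIsometryEquiv.piLpCongrLeft_apply, Equiv.piCongrLeft'_apply,
    Equiv.prodCongr_symm, Equiv.prodCongr_apply, Equiv.Perm.inv_def, Equiv.symm_symm,
    Equiv.refl_symm, Prod.map_apply, Equiv.refl_apply]
  rfl

theorem dW_le_iff (x y : Fin n → EuclideanSpace ℝ (Fin M)) {δ : ℝ} (hδ : 0 ≤ δ) :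
    dW x y ≤ δ ↔ ∃ σ : Equiv.Perm (Fin n), ∑ i, dist (x i) (y (σ i)) ^ 2 ≤ n * δ ^ 2 := by
  rw [dW, Real.sqrt_le_iff, ← Finset.inf'_univ_eq_ciInf, Finset.inf'_le_iff]
  simp only [hδ, true_and, Finset.mem_univ]
  refine exists_congr fun σ => ?_
  rcases n.eq_zero_or_pos with rfl | hn
  · simpa using pow_nonneg hδ 2
  · rw [one_div, inv_mul_le_iff₀ (by exact_mod_cast hn)]

theorem sum_dist_comp_perm_sq (x y : Fin n → EuclideanSpace ℝ (Fin M))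
    (σ : Equiv.Perm (Fin n)) :
    ∑ i, dist (x i) (y (σ i)) ^ 2 = dist (concat (x ∘ σ.symm)) (concat y) ^ 2 := by
  rw [dist_concat_sq, ← Equiv.sum_comp σ (fun j => dist ((x ∘ σ.symm) j) (y j) ^ 2)]
  simp

theorem setOf_dW_deconcat_le_eq_iUnion (x : Fin n → EuclideanSpace ℝ (Fin M)) {δ : ℝ}
    (hδ : 0 ≤ δ) :
    {z | dW x (deconcat z) ≤ δ} =
      ⋃ σ : Equiv.Perm (Fin n), closedBall (concat (x ∘ σ)) (√n * δ) := by
  ext z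
  have hr : (√n * δ) ^ 2 = n * δ ^ 2 := by rw [mul_pow, Real.sq_sqrt n.cast_nonneg]
  simp only [Set.mem_ofPred_eq, Set.mem_iUnion, mem_closedBall, dW_le_iff x _ hδ,
    sum_dist_comp_perm_sq, concat_deconcat, ← hr, dist_comm z,
    sq_le_sq₀ dist_nonneg (mul_nonneg (Real.sqrt_nonneg n) hδ)]
  exact ⟨fun ⟨σ, h⟩ => ⟨σ.symm, h⟩, fun ⟨σ, h⟩ => ⟨σ.symm, by simpa using h⟩⟩

end Blocks

theorem stmt10_general {n M : ℕ} (x : Fin n → EuclideanSpace ℝ (Fin M))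
    (hx : Function.Injective x)
    (p : EuclideanSpace ℝ (Fin n × Fin M) → ℝ) (hint : Integrable p)
    (hinv : ∀ (σ : Equiv.Perm (Fin n)) (y : Fin n → EuclideanSpace ℝ (Fin M)),
      p (concat (y ∘ σ)) = p (concat y)) :
    ∃ δ₀ > 0, ∀ δ : ℝ, 0 < δ → δ < δ₀ →
      (∫ z in {z : EuclideanSpace ℝ (Fin n × Fin M) | dW x (deconcat z) ≤ δ}, p z) =
        (n.factorial : ℝ) * ∫ z in closedBall (concat x) (Real.sqrt n * δ), p z := by
  have hcentres : Function.Injective fun σ : Equiv.Perm (Fin n) => concat (x ∘ σ) :=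
    concat_injective.comp (hx.comp_left.comp DFunLike.coe_injective)
  obtain ⟨ε, hε, hdisj⟩ := exists_pos_pairwise_disjoint_closedBall hcentres
  refine ⟨ε / (√n + 1), by positivity, fun δ hδ hδε => ?_⟩
  have hr : √n * δ < ε := by
    rw [lt_div_iff₀ (by positivity)] at hδε
    linarith
  have hball (σ : Equiv.Perm (Fin n)) :
      ∫ z in closedBall (concat (x ∘ σ)) (√n * δ), p z =
        ∫ z in closedBall (concat x) (√n * δ), p z := by
    rw [← blockPerm_concat]
    refine setIntegral_closedBall_apply_eq _ (fun z => ?_) _ _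
    rw [← concat_deconcat z, blockPerm_concat, hinv]
  rw [setOf_dW_deconcat_le_eq_iUnion x hδ.le,
    integral_iUnion (fun _ => measurableSet_closedBall) (hdisj _ hr) hint.integrableOn,
    tsum_fintype]
  simp only [hball, Finset.sum_const, Finset.card_univ, Fintype.card_perm, Fintype.card_fin,
    nsmul_eq_mul]

theorem stmt10 {n M : ℕ} (x : Fin n → EuclideanSpace ℝ (Fin M))
    (hx : Function.Injective x)
    (p : EuclideanSpace ℝ (Fin n × Fin M) → ℝ) (hc : Continuous p)
    (h0 : ∀ z, 0 ≤ p z) (hint : Integrable p)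
    (hinv : ∀ (σ : Equiv.Perm (Fin n)) (y : Fin n → EuclideanSpace ℝ (Fin M)),
      p (concat (y ∘ σ)) = p (concat y)) :
    ∃ δ₀ > 0, ∀ δ : ℝ, 0 < δ → δ < δ₀ →
      (∫ z in {z : EuclideanSpace ℝ (Fin n × Fin M) | dW x (deconcat z) ≤ δ}, p z) =
        (n.factorial : ℝ) * ∫ z in closedBall (concat x) (Real.sqrt n * δ), p z :=
  stmt10_general x hx p hint hinv
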